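/- Let ℓ be a prime, m ∈ ℕ ∪ {∞}, (K,v) a valued field, and w a valuation of the residue field Kv. Let ρ : D_v^m → 𝔤^m(Kv), σ ↦ σ_v, denote the canonical map (which is surjective with kernel I_v^m). Then I_v^m ⊆ I_{w∘v}^m and I_v^m ⊆ D_{w∘v}^m ⊆ D_v^m, and one has ρ(D_{w∘v}^m) = D_w^m, ρ(I_{w∘v}^m) = I_w^m, D_{w∘v}^m = ρ^{−1}(D_w^m) and I_{w∘v}^m = ρ^{−1}(I_w^m); i.e., under the identification D_v^m/I_v^m ≅ 𝔤^m(Kv), one has D_w^m = D_{w∘v}^m/I_v^m and I_w^m = I_{w∘v}^m/I_v^m. -/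

import Mathlib

open Polynomial

noncomputable section

/-- The coefficient ring `Λ_m`: `ℤ/ℓ^m` for finite `m`, and `ℤ_ℓ` for `m = ∞`. -/
def Lam (ℓ : ℕ) [Fact ℓ.Prime] : ℕ∞ → Type
  | ⊤ => PadicInt ℓ
  | (m : ℕ) => ZMod (ℓ ^ m)

instance (ℓ : ℕ) [Fact ℓ.Prime] : (m : ℕ∞) → CommRing (Lam ℓ m)
  | ⊤ => inferInstanceAs (CommRing (PadicInt ℓ))
  | (m : ℕ) => inferInstanceAs (CommRing (ZMod (ℓ ^ m)))

/-- The canonical projection `Λ_m → Λ_n` (for `n ≤ m`; junk value `0` otherwise). -/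
def LamProj (ℓ : ℕ) [Fact ℓ.Prime] : (m n : ℕ∞) → Lam ℓ m →+ Lam ℓ n
  | ⊤, ⊤ => AddMonoidHom.id _
  | ⊤, (n : ℕ) => (PadicInt.toZModPow n).toAddMonoidHom
  | (m : ℕ), (n : ℕ) =>
      if h : ℓ ^ n ∣ ℓ ^ m then (ZMod.castHom h (ZMod (ℓ ^ n))).toAddMonoidHom else 0
  | (_ : ℕ), ⊤ => 0

/-- The `ℓ^m`-minimized Galois group `𝔤^m(K) = Hom(Kˣ, Λ_m)`. -/
abbrev gal (ℓ : ℕ) [Fact ℓ.Prime] (m : ℕ∞) (K : Type*) [Field K] : Type _ :=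
  Additive Kˣ →+ Lam ℓ m

variable {ℓ : ℕ} [Fact ℓ.Prime] {K : Type*} [Field K]

open scoped Classical

/-- Evaluation of `σ ∈ 𝔤^m(K)` at a unit of `K`. -/
def galu {m : ℕ∞} (σ : gal ℓ m K) (x : Kˣ) : Lam ℓ m :=
  σ (Additive.ofMul x)

/-- Evaluation of `σ ∈ 𝔤^m(K)` at an arbitrary element of `K` (junk value `0` at `0`). -/
def galApp {m : ℕ∞} (σ : gal ℓ m K) (x : K) : Lam ℓ m :=
  if hx : x ≠ 0 then galu σ (Units.mk0 x hx) else 0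

/-- Scalar multiplication of `𝔤^m(K)` by `Λ_m`. -/
def galSmul {m : ℕ∞} (a : Lam ℓ m) (σ : gal ℓ m K) : gal ℓ m K :=
  AddMonoidHom.mk' (fun x => a * σ x) (by intro x y; simp only [map_add, mul_add])

/-- The canonical map `𝔤^m(K) → 𝔤^n(K)`, `σ ↦ σ_n`. -/
def galProj (m n : ℕ∞) (σ : gal ℓ m K) : gal ℓ n K :=
  (LamProj ℓ m n).comp σ

/-- `(σ,τ)` is a C-pair: `σ(x)·τ(1−x) = σ(1−x)·τ(x)` for all `x ∈ K ∖ {0,1}`. -/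
def IsCPair {m : ℕ∞} (σ τ : gal ℓ m K) : Prop :=
  ∀ x : K, x ≠ 0 → x ≠ 1 →
    galApp σ x * galApp τ (1 - x) = galApp σ (1 - x) * galApp τ x

/-- A subset of `𝔤^m(K)` is a C-set if all pairs of its elements are C-pairs. -/
def IsCSet {m : ℕ∞} (S : Set (gal ℓ m K)) : Prop :=
  ∀ σ ∈ S, ∀ τ ∈ S, IsCPair σ τ

/-- `μ_{c·ℓ^m} ⊂ K`: the polynomial `X^{c·ℓ^m} − 1` splits completely in `K`
(for all finite exponents when `m = ∞`). -/
def MuIn (K : Type*) [Field K] (c ℓ : ℕ) : ℕ∞ → Prop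
  | ⊤ => ∀ k : ℕ, Polynomial.Splits ((Polynomial.X : K[X]) ^ (c * ℓ ^ k) - 1)
  | (N : ℕ) => Polynomial.Splits ((Polynomial.X : K[X]) ^ (c * ℓ ^ N) - 1)

/-- `M_r(n) = (r+1)·n − r`. -/
def Mfun (r : ℕ) : ℕ∞ → ℕ∞
  | ⊤ => ⊤
  | (n : ℕ) => (((r + 1) * n - r : ℕ) : ℕ∞)

/-- `N(n) = M_1((6·ℓ^{3n−2} − 7)·(n−1) + 3n − 2)`. -/
def Nfun (ℓ : ℕ) : ℕ∞ → ℕ∞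
  | ⊤ => ⊤
  | (n : ℕ) => Mfun 1 (((6 * ℓ ^ (3 * n - 2) - 7) * (n - 1) + 3 * n - 2 : ℕ) : ℕ∞)

/-- `R(n) = N(M_2(M_1(n)))`. -/
def Rfun (ℓ : ℕ) (n : ℕ∞) : ℕ∞ :=
  Nfun ℓ (Mfun 2 (Mfun 1 n))

/-- The minimized inertia group `I_v^m` of a valuation (valuation subring) of `K`:
homomorphisms vanishing on the `v`-units. -/
def inertia (ℓ : ℕ) [Fact ℓ.Prime] (m : ℕ∞) (A : ValuationSubring K) : Set (gal ℓ m K) :=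
  {σ | ∀ x : Kˣ, A.valuation (x : K) = 1 → galu σ x = 0}

/-- The minimized decomposition group `D_v^m` of a valuation (valuation subring) of `K`:
homomorphisms vanishing on the principal `v`-units `1 + 𝔪_v`. -/
def decomp (ℓ : ℕ) [Fact ℓ.Prime] (m : ℕ∞) (A : ValuationSubring K) : Set (gal ℓ m K) :=
  {σ | ∀ x : Kˣ, A.valuation ((x : K) - 1) < 1 → galu σ x = 0}

/-- A subgroup of (the units of) a linearly ordered group-with-zero is convex. -/
def IsConvexSub {Γ : Type*} [LinearOrderedCommGroupWithZero Γ] (C : Subgroup Γˣ) : Prop :=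
  ∀ γ c : Γˣ, (1 : Γ) ≤ (γ : Γ) → (γ : Γ) ≤ (c : Γ) → c ∈ C → γ ∈ C

/-- A subgroup is `ℓ`-divisible. -/
def IsLDivisible {Γ : Type*} [LinearOrderedCommGroupWithZero Γ] (ℓ : ℕ) (C : Subgroup Γˣ) :
    Prop :=
  ∀ c ∈ C, ∃ d ∈ C, d ^ ℓ = c

/-- Condition (V1): the value group `vK` contains no nontrivial `ℓ`-divisible convex
subgroups. -/
def NoLDivConvex (ℓ : ℕ) (A : ValuationSubring K) : Prop :=
  ∀ C : Subgroup (A.ValueGroup)ˣ, IsConvexSub C → IsLDivisible ℓ C → C = ⊥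

/-- The residue field `Kv` of a valuation. -/
abbrev resField (A : ValuationSubring K) : Type _ := IsLocalRing.ResidueField A

/-- `τ ∈ 𝔤^m(Kv)` is the element induced by `σ ∈ D_v^m` (i.e. `τ = σ_v`): for every
`v`-unit `x` one has `τ(x̄) = σ(x)`. -/
def Induces {m : ℕ∞} (A : ValuationSubring K) (σ : gal ℓ m K)
    (τ : gal ℓ m (resField A)) : Prop :=
  ∀ (x : Kˣ) (h : A.valuation (x : K) = 1),
    galApp τ (IsLocalRing.residue A ⟨(x : K), (A.valuation_le_one_iff (x : K)).mp h.le⟩) =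
      galu σ x

/-- An `m`-visible valuation. -/
def IsVisibleVal (ℓ : ℕ) [Fact ℓ.Prime] (m : ℕ∞) (A : ValuationSubring K) : Prop :=
  NoLDivConvex ℓ A ∧
  ¬ IsCSet (Set.univ : Set (gal ℓ m (resField A))) ∧
  ∀ B : ValuationSubring (resField A),
    decomp ℓ m B = Set.univ → inertia ℓ m B = {0}

/-- `Σ^⊥ = ∩_{σ ∈ Σ} ker σ ⊆ Kˣ`. -/
def orth {m : ℕ∞} (S : Set (gal ℓ m K)) : Set Kˣ :=
  {x | ∀ σ ∈ S, galu σ x = 0}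

/-- `σ` is valuative: `σ ∈ I_v^m` for some valuation `v` of `K`. -/
def IsValuative {m : ℕ∞} (σ : gal ℓ m K) : Prop :=
  ∃ A : ValuationSubring K, σ ∈ inertia ℓ m A

/-- `V = v_σ` is the coarsest valuation with `σ ∈ I_V^m`. -/
def IsVsigma {m : ℕ∞} (σ : gal ℓ m K) (V : ValuationSubring K) : Prop :=
  σ ∈ inertia ℓ m V ∧ ∀ W : ValuationSubring K, σ ∈ inertia ℓ m W → W ≤ V

/-- `V = v_Σ` is the coarsest valuation with `Σ ⊆ I_V^m`. -/
def IsVSet {m : ℕ∞} (S : Set (gal ℓ m K)) (V : ValuationSubring K) : Prop :=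
  S ⊆ inertia ℓ m V ∧ ∀ W : ValuationSubring K, S ⊆ inertia ℓ m W → W ≤ V

/-- The set `D^m_n(Σ)`. -/
def Dmn (n m : ℕ∞) (S : Set (gal ℓ n K)) : Set (gal ℓ n K) :=
  {τ | ∀ σ ∈ S, ∃ τ₁ τ₂ : gal ℓ n K, ∃ σ' τ' τ₁' τ₂' : gal ℓ m K,
    galProj m n σ' = σ ∧ galProj m n τ' = τ ∧ galProj m n τ₁' = τ₁ ∧ galProj m n τ₂' = τ₂ ∧
    ¬ IsCPair τ₁ τ₂ ∧ IsCPair σ' τ' ∧ IsCPair σ' τ₁' ∧ IsCPair σ' τ₂'}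

/-- The set `I^m_n(Σ)`. -/
def Imn (n m : ℕ∞) (S : Set (gal ℓ n K)) : Set (gal ℓ n K) :=
  {σ | σ ∈ S ∧ ∃ σ' : gal ℓ m K, galProj m n σ' = σ ∧
    ∀ τ ∈ S, ∃ τ' : gal ℓ m K, galProj m n τ' = τ ∧ IsCPair σ' τ'}

/-- `K` is a function field over `k`, i.e. a finitely generated field extension. -/
def IsFunctionField (k K : Type*) [Field k] [Field K] [Algebra k K] : Prop :=
  ∃ s : Finset K, IntermediateField.adjoin k (s : Set K) = ⊤

/-- `trdeg(K|k) = d`. -/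
def HasTrdeg (k K : Type*) [Field k] [Field K] [Algebra k K] (d : ℕ) : Prop :=
  ∃ b : Fin d → K, IsTranscendenceBasis k b


/-- The set `ℓ^n·𝔤^m(K)` (interpreted as the trivial subgroup when `n = ∞`). -/
def lPowSet (ℓ : ℕ) [Fact ℓ.Prime] (m : ℕ∞) (K : Type*) [Field K] : ℕ∞ → Set (gal ℓ m K)
  | ⊤ => {0}
  | (k : ℕ) => {x | ∃ σ : gal ℓ m K, x = galSmul ((ℓ : Lam ℓ m) ^ k) σ}

end

/-! Restriction to `v`-units and reduction identify `O_v^× / U_v^1` with `(Kv)^×`, and the units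
and principal units of `w ∘ v` are exactly the `v`-units whose residues are units, resp. principal
units, of `w`. Since `σ ∈ D_v^m` and `σ_v` agree on `O_v^×` through this identification, `σ`
vanishes on the units (principal units) of `w ∘ v` iff `σ_v` vanishes on those of `w`.

Surjectivity of `ρ` needs every homomorphism `O_v^× → Λ_m` to extend to `K^×`. As the value group
is torsion free, `O_v^×` is saturated in `K^×`; a saturated subgroup with finitely generated
quotient is a direct summand, and by compactness of `Λ_m` the extensions that are additive at
finitely many pairs of points glue to an extension on all of `K^×`. -/
section Extension

variable {G M : Type*} [AddCommGroup G] [AddCommGroup M]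

theorem Submodule.isTorsionFree_quotient_of_nsmulSaturated {N : Submodule ℤ G}
    (hN : N.toAddSubgroup.NSMulSaturated) : Module.IsTorsionFree ℤ (G ⧸ N) := by
  refine .of_smul_eq_zero fun c q hcq => ?_
  obtain ⟨x, rfl⟩ := N.mkQ_surjective q
  rw [← map_zsmul, Submodule.mkQ_apply, Submodule.Quotient.mk_eq_zero] at hcq
  simpa [Submodule.Quotient.mk_eq_zero] using AddSubgroup.saturated_iff_zsmul.mp hN c x hcq

theorem Submodule.exists_retraction_of_nsmulSaturated {N : Submodule ℤ G}
    (hN : N.toAddSubgroup.NSMulSaturated) [Module.Finite ℤ (G ⧸ N)] :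
    ∃ π : G →ₗ[ℤ] N, ∀ x : N, π x = x := by
  have := N.isTorsionFree_quotient_of_nsmulSaturated hN
  obtain ⟨s, hs⟩ := N.mkQ.exists_rightInverse_of_surjective N.range_mkQ
  have hmem (x : G) : x - s (N.mkQ x) ∈ N := by
    rw [← Submodule.Quotient.mk_eq_zero, ← Submodule.mkQ_apply, map_sub,
      ← LinearMap.comp_apply N.mkQ s, hs, LinearMap.id_apply, sub_self]
  refine ⟨(LinearMap.id - s ∘ₗ N.mkQ).codRestrict N hmem, fun x => Subtype.ext ?_⟩
  simp [(Submodule.Quotient.mk_eq_zero N).mpr x.2]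

theorem AddSubgroup.exists_extension_additive_on_finset {H : AddSubgroup G}
    (hH : H.NSMulSaturated) (f : H →+ M) (T : Finset G) :
    ∃ F : G → M, (∀ x ∈ T, ∀ y ∈ T, F (x + y) = F x + F y) ∧ ∀ h : H, F h = f h := by
  set P : Submodule ℤ G := Submodule.span ℤ T ⊔ H.toIntSubmodule
  set N : Submodule ℤ P := H.toIntSubmodule.comap P.subtype
  have hN : N.toAddSubgroup.NSMulSaturated := fun _ _ hx => hH hx
  have : Module.Finite ℤ (P ⧸ N) :=
    .equiv (LinearMap.quotientInfEquivSupQuotient (Submodule.span ℤ (T : Set G)) _)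
  obtain ⟨π, hπ⟩ := N.exists_retraction_of_nsmulSaturated hN
  let ψ : P →+ M := f.comp <| .mk' (fun x => ⟨π x, (π x).2⟩) fun _ _ => by ext; simp
  classical
  have hTP {x : G} (hx : x ∈ T) : x ∈ P := Submodule.mem_sup_left (Submodule.subset_span hx)
  refine ⟨fun x => if hx : x ∈ P then ψ ⟨x, hx⟩ else 0, fun x hx y hy => ?_, fun h => ?_⟩
  · simp only [dif_pos (hTP hx), dif_pos (hTP hy), dif_pos (P.add_mem (hTP hx) (hTP hy)),
      ← map_add]
    rfl
  · have hP : (h : G) ∈ P := Submodule.mem_sup_right h.2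
    simp only [dif_pos hP, ψ, AddMonoidHom.comp_apply, AddMonoidHom.mk'_apply]
    exact congrArg f (Subtype.ext (congrArg (fun z : N => (z : G)) (hπ ⟨⟨h, hP⟩, h.2⟩)))

theorem AddSubgroup.exists_extension_of_nsmulSaturated [TopologicalSpace M] [CompactSpace M]
    [T2Space M] [ContinuousAdd M] {H : AddSubgroup G} (hH : H.NSMulSaturated) (f : H →+ M) :
    ∃ F : G →+ M, ∀ h : H, F h = f h := by
  let extending : Set (G → M) := {F | ∀ h : H, F h = f h}
  let additiveAt (p : G × G) : Set (G → M) := {F | F (p.1 + p.2) = F p.1 + F p.2}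
  have hext : IsCompact extending := by
    refine IsClosed.isCompact ?_
    simp only [extending, Set.ofPred_forall]
    exact isClosed_iInter fun h => isClosed_eq (continuous_apply _) continuous_const
  have hadd (p : G × G) : IsClosed (additiveAt p) :=
    isClosed_eq (continuous_apply _) (by fun_prop)
  obtain ⟨F, hFext, hFadd⟩ := hext.inter_iInter_nonempty additiveAt hadd fun u => by
    classical
    obtain ⟨F, hFadd, hFext⟩ :=
      AddSubgroup.exists_extension_additive_on_finset hH f (u.image Prod.fst ∪ u.image Prod.snd)
    refine ⟨F, hFext, Set.mem_iInter₂.mpr fun p hp => hFadd _ ?_ _ ?_⟩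
    · exact Finset.mem_union_left _ (Finset.mem_image_of_mem _ hp)
    · exact Finset.mem_union_right _ (Finset.mem_image_of_mem _ hp)
  exact ⟨.mk' F fun x y => Set.mem_iInter.mp hFadd (x, y), hFext⟩

end Extension

theorem Lam.exists_extension {ℓ : ℕ} [Fact ℓ.Prime] {m : ℕ∞} {G : Type*} [AddCommGroup G]
    {H : AddSubgroup G} (hH : H.NSMulSaturated) (f : H →+ Lam ℓ m) :
    ∃ F : G →+ Lam ℓ m, ∀ h : H, F h = f h := by
  cases m with
  | top => exact AddSubgroup.exists_extension_of_nsmulSaturated (M := PadicInt ℓ) hH f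
  | coe m =>
    have : NeZero (ℓ ^ m) := ⟨pow_ne_zero m (Fact.out : ℓ.Prime).ne_zero⟩
    let : TopologicalSpace (ZMod (ℓ ^ m)) := ⊥
    have : DiscreteTopology (ZMod (ℓ ^ m)) := ⟨rfl⟩
    exact AddSubgroup.exists_extension_of_nsmulSaturated (M := ZMod (ℓ ^ m)) hH f

namespace ValuationSubring

variable {K : Type*} [Field K]

theorem unitGroup_powSaturated (A : ValuationSubring K) : A.unitGroup.PowSaturated := by
  intro n x hx
  rw [Subgroup.mem_toSubmonoid, mem_unitGroup_iff, Units.val_pow_eq_pow_val, map_pow] at hx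
  rcases eq_or_ne n 0 with hn | hn
  · exact .inl hn
  · exact .inr (pow_eq_one_iff_left hn |>.mp hx)

theorem valuation_lt_one_of_le {W A : ValuationSubring K} (h : W ≤ A) {y : K}
    (hy : A.valuation y < 1) : W.valuation y < 1 := by
  by_contra! hle
  have := monotone_mapOfLE W A h hle
  rw [map_one, mapOfLE_valuation_apply] at this
  exact this.not_gt hy

/-- `W` is the valuation ring of `w ∘ v`, where `v` and `w` are the valuations of `A` and of `B`. -/
def IsComposite (A : ValuationSubring K) (B : ValuationSubring (IsLocalRing.ResidueField A))
    (W : ValuationSubring K) : Prop :=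
  ∀ y : K, y ∈ W ↔ ∃ h : y ∈ A, IsLocalRing.residue A ⟨y, h⟩ ∈ B

namespace IsComposite

variable {A : ValuationSubring K} {B : ValuationSubring (IsLocalRing.ResidueField A)}
  {W : ValuationSubring K}

theorem le (hW : A.IsComposite B W) : W ≤ A := fun y hy => ((hW y).mp hy).1

theorem valuation_le_one_iff (hW : A.IsComposite B W) (y : A) :
    W.valuation y ≤ 1 ↔ B.valuation (IsLocalRing.residue A y) ≤ 1 := by
  rw [W.valuation_le_one_iff, B.valuation_le_one_iff, hW]
  exact ⟨fun ⟨_, h⟩ => h, fun h => ⟨y.2, h⟩⟩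

theorem valuation_lt_one_iff (hW : A.IsComposite B W) (y : A) :
    W.valuation y < 1 ↔ B.valuation (IsLocalRing.residue A y) < 1 := by
  by_cases hy : IsUnit y
  · obtain ⟨u, rfl⟩ := hy
    have hu : ((u : A) : K) ≠ 0 := by simp
    have hres : IsLocalRing.residue A u ≠ 0 := (u.isUnit.map (IsLocalRing.residue A)).ne_zero
    have hinv : ((u⁻¹ : Aˣ) : A) = ((u : A) : K)⁻¹ :=
      eq_inv_of_mul_eq_one_right (congrArg Subtype.val u.mul_inv)
    rw [← not_le, ← not_le, Valuation.one_le_val_iff _ hu, Valuation.one_le_val_iff _ hres,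
      ← hinv, ← map_units_inv, hW.valuation_le_one_iff]
  · have hmax : y ∈ IsLocalRing.maximalIdeal A := hy
    rw [(IsLocalRing.residue_eq_zero_iff y).mpr hmax, map_zero]
    exact iff_of_true (valuation_lt_one_of_le hW.le ((A.valuation_lt_one_iff y).mp hmax))
      zero_lt_one

theorem valuation_eq_one_iff (hW : A.IsComposite B W) (y : A) :
    W.valuation y = 1 ↔ B.valuation (IsLocalRing.residue A y) = 1 := by
  rw [eq_iff_le_not_lt, eq_iff_le_not_lt, hW.valuation_le_one_iff, hW.valuation_lt_one_iff]

theorem mem_unitGroup_iff (hW : A.IsComposite B W) (x : Kˣ) :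
    x ∈ W.unitGroup ↔
      ∃ hx : x ∈ A.unitGroup, A.unitGroupToResidueFieldUnits ⟨x, hx⟩ ∈ B.unitGroup := by
  refine ⟨fun h => ⟨unitGroup_le_unitGroup.mpr hW.le h, ?_⟩, fun ⟨hx, h⟩ => ?_⟩
  · exact (hW.valuation_eq_one_iff (A.unitGroupMulEquiv ⟨x, _⟩)).mp h
  · exact (hW.valuation_eq_one_iff (A.unitGroupMulEquiv ⟨x, hx⟩)).mpr h

theorem mem_principalUnitGroup_iff (hW : A.IsComposite B W) (x : Kˣ) :
    x ∈ W.principalUnitGroup ↔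
      ∃ hx : x ∈ A.unitGroup, A.unitGroupToResidueFieldUnits ⟨x, hx⟩ ∈ B.principalUnitGroup := by
  have key (hx : x ∈ A.unitGroup) :
      W.valuation ((x : K) - 1) < 1 ↔
        B.valuation ((A.unitGroupToResidueFieldUnits ⟨x, hx⟩ : resField A) - 1) < 1 := by
    rw [← map_one (IsLocalRing.residue A)]
    exact hW.valuation_lt_one_iff (A.unitGroupMulEquiv ⟨x, hx⟩ - 1)
  refine ⟨fun h => ?_, fun ⟨hx, h⟩ => (key hx).mpr h⟩
  have hx := unitGroup_le_unitGroup.mpr hW.le (W.principal_units_le_units h)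
  exact ⟨hx, (key hx).mp h⟩

end IsComposite

end ValuationSubring

section Galois

variable {ℓ : ℕ} [Fact ℓ.Prime] {m : ℕ∞} {K : Type*} [Field K]

theorem galApp_coe (σ : gal ℓ m K) (x : Kˣ) : galApp σ (x : K) = galu σ x := by
  simp [galApp, Units.mk0_val]

theorem induces_iff {A : ValuationSubring K} {σ : gal ℓ m K} {τ : gal ℓ m (resField A)} :
    Induces A σ τ ↔ ∀ x : A.unitGroup, galu τ (A.unitGroupToResidueFieldUnits x) = galu σ x := by
  simp only [Induces, ← galApp_coe]
  exact ⟨fun h x => h x x.2, fun h x hx => h ⟨x, hx⟩⟩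

theorem exists_induces (A : ValuationSubring K) (τ : gal ℓ m (resField A)) :
    ∃ σ : gal ℓ m K, Induces A σ τ := by
  obtain ⟨σ, hσ⟩ := Lam.exists_extension (H := A.unitGroup.toAddSubgroup)
    (fun _ _ hx => A.unitGroup_powSaturated hx) (τ.comp A.unitGroupToResidueFieldUnits.toAdditive)
  exact ⟨σ, induces_iff.mpr fun x => (hσ x).symm⟩

theorem Induces.forall_galu_eq_zero_iff {A : ValuationSubring K} {σ : gal ℓ m K}
    {τ : gal ℓ m (resField A)} (h : Induces A σ τ) {S : Subgroup Kˣ} {T : Subgroup (resField A)ˣ}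
    (hST : ∀ x : Kˣ, x ∈ S ↔ ∃ hx : x ∈ A.unitGroup, A.unitGroupToResidueFieldUnits ⟨x, hx⟩ ∈ T) :
    (∀ x ∈ S, galu σ x = 0) ↔ ∀ y ∈ T, galu τ y = 0 := by
  rw [induces_iff] at h
  refine ⟨fun hσ y hy => ?_, fun hτ x hx => ?_⟩
  · obtain ⟨x, rfl⟩ := A.surjective_unitGroupToResidueFieldUnits y
    rw [h, hσ _ ((hST x).mpr ⟨x.2, hy⟩)]
  · obtain ⟨hxA, hxT⟩ := (hST x).mp hx
    rw [← h ⟨x, hxA⟩, hτ _ hxT]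

end Galois

section Decomposition

variable {ℓ : ℕ} [Fact ℓ.Prime] {m : ℕ∞} {K : Type*} [Field K]

theorem inertia_subset_inertia {A W : ValuationSubring K} (h : W ≤ A) :
    inertia ℓ m A ⊆ inertia ℓ m W :=
  fun _ hσ x hx => hσ x (ValuationSubring.unitGroup_le_unitGroup.mpr h hx)

theorem inertia_subset_decomp (V : ValuationSubring K) : inertia ℓ m V ⊆ decomp ℓ m V :=
  fun _ hσ x hx => hσ x (V.principal_units_le_units hx)

theorem decomp_subset_decomp {A W : ValuationSubring K} (h : W ≤ A) :
    decomp ℓ m W ⊆ decomp ℓ m A :=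
  fun _ hσ x hx => hσ x (ValuationSubring.principalUnitGroup_le_principalUnitGroup.mpr h hx)

variable {A : ValuationSubring K} {B : ValuationSubring (resField A)} {W : ValuationSubring K}
  {σ : gal ℓ m K} {τ : gal ℓ m (resField A)}

theorem Induces.mem_inertia_iff (hW : A.IsComposite B W) (h : Induces A σ τ) :
    σ ∈ inertia ℓ m W ↔ τ ∈ inertia ℓ m B :=
  h.forall_galu_eq_zero_iff hW.mem_unitGroup_iff

theorem Induces.mem_decomp_iff (hW : A.IsComposite B W) (h : Induces A σ τ) :
    σ ∈ decomp ℓ m W ↔ τ ∈ decomp ℓ m B :=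
  h.forall_galu_eq_zero_iff hW.mem_principalUnitGroup_iff

end Decomposition

theorem stmt7_general (ℓ : ℕ) [Fact ℓ.Prime] (m : ℕ∞) (K : Type*) [Field K]
    (A : ValuationSubring K) (B : ValuationSubring (resField A))
    (W : ValuationSubring K)
    (hW : ∀ y : K, y ∈ W ↔ ∃ h : y ∈ A, IsLocalRing.residue A ⟨y, h⟩ ∈ B) :
    inertia ℓ m A ⊆ inertia ℓ m W ∧
    inertia ℓ m A ⊆ decomp ℓ m W ∧
    decomp ℓ m W ⊆ decomp ℓ m A ∧
    (∀ σ ∈ decomp ℓ m W, ∀ τ : gal ℓ m (resField A), Induces A σ τ →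
      τ ∈ decomp ℓ m B) ∧
    (∀ τ ∈ decomp ℓ m B, ∃ σ ∈ decomp ℓ m W, Induces A σ τ) ∧
    (∀ σ ∈ inertia ℓ m W, ∀ τ : gal ℓ m (resField A), Induces A σ τ →
      τ ∈ inertia ℓ m B) ∧
    (∀ τ ∈ inertia ℓ m B, ∃ σ ∈ inertia ℓ m W, Induces A σ τ) ∧
    (∀ σ ∈ decomp ℓ m A, ∀ τ : gal ℓ m (resField A), Induces A σ τ →
      τ ∈ decomp ℓ m B → σ ∈ decomp ℓ m W) ∧
    (∀ σ ∈ decomp ℓ m A, ∀ τ : gal ℓ m (resField A), Induces A σ τ →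
      τ ∈ inertia ℓ m B → σ ∈ inertia ℓ m W) := by
  have hWA : W ≤ A := ValuationSubring.IsComposite.le hW
  refine ⟨inertia_subset_inertia hWA, (inertia_subset_inertia hWA).trans (inertia_subset_decomp W),
    decomp_subset_decomp hWA, fun σ hσ τ h => (h.mem_decomp_iff hW).mp hσ, fun τ hτ => ?_,
    fun σ hσ τ h => (h.mem_inertia_iff hW).mp hσ, fun τ hτ => ?_,
    fun σ _ τ h hτ => (h.mem_decomp_iff hW).mpr hτ, fun σ _ τ h hτ => (h.mem_inertia_iff hW).mpr hτ⟩
  · obtain ⟨σ, h⟩ := exists_induces A τ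
    exact ⟨σ, (h.mem_decomp_iff hW).mpr hτ, h⟩
  · obtain ⟨σ, h⟩ := exists_induces A τ
    exact ⟨σ, (h.mem_inertia_iff hW).mpr hτ, h⟩

/-- Behaviour of minimized inertia/decomposition under composition of valuations:
for `W = w∘v` one has `D_w^m = D_{w∘v}^m/I_v^m` and `I_w^m = I_{w∘v}^m/I_v^m`. -/
theorem stmt7 (ℓ : ℕ) [Fact ℓ.Prime] (m : ℕ∞) (hm : 1 ≤ m) (K : Type*) [Field K]
    (A : ValuationSubring K) (B : ValuationSubring (resField A))
    (W : ValuationSubring K)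
    (hW : ∀ y : K, y ∈ W ↔ ∃ h : y ∈ A, IsLocalRing.residue A ⟨y, h⟩ ∈ B) :
    inertia ℓ m A ⊆ inertia ℓ m W ∧
    inertia ℓ m A ⊆ decomp ℓ m W ∧
    decomp ℓ m W ⊆ decomp ℓ m A ∧
    (∀ σ ∈ decomp ℓ m W, ∀ τ : gal ℓ m (resField A), Induces A σ τ →
      τ ∈ decomp ℓ m B) ∧
    (∀ τ ∈ decomp ℓ m B, ∃ σ ∈ decomp ℓ m W, Induces A σ τ) ∧
    (∀ σ ∈ inertia ℓ m W, ∀ τ : gal ℓ m (resField A), Induces A σ τ →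
      τ ∈ inertia ℓ m B) ∧
    (∀ τ ∈ inertia ℓ m B, ∃ σ ∈ inertia ℓ m W, Induces A σ τ) ∧
    (∀ σ ∈ decomp ℓ m A, ∀ τ : gal ℓ m (resField A), Induces A σ τ →
      τ ∈ decomp ℓ m B → σ ∈ decomp ℓ m W) ∧
    (∀ σ ∈ decomp ℓ m A, ∀ τ : gal ℓ m (resField A), Induces A σ τ →
      τ ∈ inertia ℓ m B → σ ∈ inertia ℓ m W) :=
  stmt7_general ℓ m K A B W hW
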